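/- (Xiao's key lemma) Let f : S → B be a fibred surface with general fibre F and let D be a divisor on S. Suppose there exist effective divisors Z₁ ≥ Z₂ ≥ … ≥ Z_s ≥ Z_{s+1} := 0 and rational numbers μ₁ > μ₂ > … > μ_s ≥ μ_{s+1} := 0 such that for every i = 1, …, s+1 the ℚ-divisor N_i := D − Z_i − μ_i F is nef. Then for any subset of indices {j₁ < j₂ < … < j_t} ⊆ {1, …, s}, setting j_{t+1} := s+1 and d_j := N_j · F, one has D² ≥ Σ_{i=1}^{t} (d_{j_i} + d_{j_{i+1}})(μ_{j_i} − μ_{j_{i+1}}). -/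

import Mathlib

open scoped BigOperators

/-! If `N_a, N_b` are nef and `N_b − N_a = E + c F` with `E` effective (for the divisors
`N_i = D − Z_i − μ_i F` take `E = Z_a − Z_b`, `c = μ_a − μ_b`), then
`N_b² − N_a² = (N_b + N_a)·E + c (N_b + N_a)·F ≥ c (N_a·F + N_b·F)`.
Summing over consecutive indices `j_i < j_{i+1}` telescopes to
`N_{s+1}² − N_{j₁}² = D² − N_{j₁}² ≤ D²`. -/

/-- An abstract model of the intersection theory of a smooth projective surface `S`
over `ℂ` fibred over a curve: the group of (real) divisor classes with its
intersection pairing, together with the nef and effective cones.  A (ℚ- or ℝ-)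
divisor `N` is nef if `N·C ≥ 0` for every curve `C`; in particular the intersection
of a nef divisor with an effective (or nef) divisor is non-negative. -/
structure SurfaceIntersection where
  /-- (real) divisor classes on the surface -/
  Div : Type
  [divAddCommGroup : AddCommGroup Div]
  [divModule : Module ℝ Div]
  /-- the intersection pairing -/
  inter : Div → Div → ℝ
  inter_symm : ∀ X Y : Div, inter X Y = inter Y X
  inter_add_left : ∀ X Y Z : Div, inter (X + Y) Z = inter X Z + inter Y Z
  inter_smul_left : ∀ (c : ℝ) (X Y : Div), inter (c • X) Y = c * inter X Y
  /-- nef divisor classes -/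
  Nef : Div → Prop
  /-- effective divisor classes -/
  Eff : Div → Prop
  nef_inter_eff_nonneg : ∀ {N Z : Div}, Nef N → Eff Z → 0 ≤ inter N Z
  nef_inter_nef_nonneg : ∀ {N N' : Div}, Nef N → Nef N' → 0 ≤ inter N N'
  eff_add : ∀ {Z Z' : Div}, Eff Z → Eff Z' → Eff (Z + Z')

attribute [instance] SurfaceIntersection.divAddCommGroup SurfaceIntersection.divModule

namespace SurfaceIntersection

variable (S : SurfaceIntersection)

lemma inter_sub_left (X Y W : S.Div) : S.inter (X - Y) W = S.inter X W - S.inter Y W := by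
  have h := S.inter_smul_left (-1) Y W
  rw [neg_one_smul, neg_one_mul] at h
  rw [sub_eq_add_neg, S.inter_add_left, h, sub_eq_add_neg]

lemma inter_sub_right (X Y W : S.Div) : S.inter X (Y - W) = S.inter X Y - S.inter X W := by
  rw [S.inter_symm, S.inter_sub_left, S.inter_symm Y, S.inter_symm W]

lemma inter_smul_right (c : ℝ) (X Y : S.Div) : S.inter X (c • Y) = c * S.inter X Y := by
  rw [S.inter_symm, S.inter_smul_left, S.inter_symm]

lemma inter_self_sub_inter_self (X Y : S.Div) :
    S.inter X X - S.inter Y Y = S.inter (X + Y) (X - Y) := by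
  rw [S.inter_add_left, S.inter_sub_right, S.inter_sub_right, S.inter_symm Y X]
  ring

lemma eff_sub_of_eff_sub_succ (Z : ℕ → S.Div) {m n : ℕ}
    (hZ : ∀ i, m ≤ i → i < n → S.Eff (Z i - Z (i + 1))) {a b : ℕ}
    (hma : m ≤ a) (hab : a < b) (hbn : b ≤ n) : S.Eff (Z a - Z b) := by
  induction b, hab using Nat.le_induction with
  | base => exact hZ a hma hbn
  | succ b hab ih =>
    rw [← sub_add_sub_cancel (Z a) (Z b)]
    exact S.eff_add (ih (by omega)) (hZ b (by omega) hbn)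

lemma inter_add_inter_mul_le_inter_self_sub {Na Nb : S.Div} (F : S.Div) {c : ℝ}
    (hNa : S.Nef Na) (hNb : S.Nef Nb) (hE : S.Eff (Nb - Na - c • F)) :
    (S.inter Na F + S.inter Nb F) * c ≤ S.inter Nb Nb - S.inter Na Na := by
  have hE_nonneg : 0 ≤ S.inter (Nb + Na) (Nb - Na - c • F) := by
    rw [S.inter_add_left]
    exact add_nonneg (S.nef_inter_eff_nonneg hNb hE) (S.nef_inter_eff_nonneg hNa hE)
  rw [S.inter_sub_right, S.inter_smul_right, S.inter_add_left Nb Na F] at hE_nonneg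
  rw [S.inter_self_sub_inter_self]
  linarith

lemma sum_inter_add_inter_mul_le {N : ℕ → S.Div} (F : S.Div) {c : ℕ → ℝ} {m n : ℕ}
    (hmn : m ≤ n + 1) (hN : ∀ i ∈ Finset.Icc m (n + 1), S.Nef (N i))
    (hE : ∀ i ∈ Finset.Icc m n, S.Eff (N (i + 1) - N i - c i • F)) :
    ∑ i ∈ Finset.Icc m n, (S.inter (N i) F + S.inter (N (i + 1)) F) * c i ≤
      S.inter (N (n + 1)) (N (n + 1)) - S.inter (N m) (N m) := by
  have hstep : ∀ i ∈ Finset.Icc m n, (S.inter (N i) F + S.inter (N (i + 1)) F) * c i ≤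
      S.inter (N (i + 1)) (N (i + 1)) - S.inter (N i) (N i) := fun i hi => by
    obtain ⟨hmi, hin⟩ := Finset.mem_Icc.1 hi
    exact S.inter_add_inter_mul_le_inter_self_sub F
      (hN i (Finset.mem_Icc.2 ⟨hmi, by omega⟩)) (hN (i + 1) (Finset.mem_Icc.2 ⟨by omega, by omega⟩))
      (hE i hi)
  refine (Finset.sum_le_sum hstep).trans_eq ?_
  rw [← Finset.Ico_add_one_right_eq_Icc, Finset.sum_Ico_sub (fun i => S.inter (N i) (N i)) hmn]

end SurfaceIntersection

theorem xiao_key_lemma_general (S : SurfaceIntersection) (D F : S.Div)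
    (s : ℕ) (Z : ℕ → S.Div) (μ : ℕ → ℚ)
    (hZ_antitone : ∀ i, 1 ≤ i → i ≤ s → S.Eff (Z i - Z (i + 1)))
    (hZ_last : Z (s + 1) = 0) (hμ_last : μ (s + 1) = 0)
    (hN_nef : ∀ i, 1 ≤ i → i ≤ s + 1 → S.Nef (D - Z i - (μ i : ℝ) • F))
    (t : ℕ) (j : ℕ → ℕ)
    (hj_strictMono : ∀ i, 1 ≤ i → i < t → j i < j (i + 1))
    (hj_range : ∀ i, 1 ≤ i → i ≤ t → 1 ≤ j i ∧ j i ≤ s)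
    (hj_last : j (t + 1) = s + 1) :
    ∑ i ∈ Finset.Icc 1 t,
        (S.inter (D - Z (j i) - (μ (j i) : ℝ) • F) F +
            S.inter (D - Z (j (i + 1)) - (μ (j (i + 1)) : ℝ) • F) F) *
          ((μ (j i) : ℝ) - (μ (j (i + 1)) : ℝ)) ≤
      S.inter D D := by
  have hj_mem : ∀ i, 1 ≤ i → i ≤ t + 1 → 1 ≤ j i ∧ j i ≤ s + 1 := by
    intro i hi hit
    rcases Nat.lt_or_eq_of_le hit with h | rfl
    · have := hj_range i hi (by omega); omega
    · omega
  have hj_lt : ∀ i, 1 ≤ i → i ≤ t → j i < j (i + 1) := by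
    intro i hi hit
    rcases Nat.lt_or_eq_of_le hit with h | rfl
    · exact hj_strictMono i hi h
    · have := hj_range i hi le_rfl; omega
  set N : ℕ → S.Div := fun i => D - Z (j i) - (μ (j i) : ℝ) • F
  have hN : ∀ i ∈ Finset.Icc 1 (t + 1), S.Nef (N i) := fun i hi => by
    obtain ⟨hi1, hit⟩ := Finset.mem_Icc.1 hi
    exact (hj_mem i hi1 hit).elim (hN_nef _)
  have hE : ∀ i ∈ Finset.Icc 1 t,
      S.Eff (N (i + 1) - N i - ((μ (j i) : ℝ) - μ (j (i + 1))) • F) := fun i hi => by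
    obtain ⟨hi1, hit⟩ := Finset.mem_Icc.1 hi
    convert S.eff_sub_of_eff_sub_succ Z (fun k hk hks => hZ_antitone k hk (by omega))
      (hj_mem i hi1 (by omega)).1 (hj_lt i hi1 hit) (hj_mem (i + 1) (by omega) (by omega)).2
      using 1
    module
  have hN_last : N (t + 1) = D := by simp [N, hj_last, hZ_last, hμ_last]
  have hN_first_sq := S.nef_inter_nef_nonneg (hN 1 (by simp)) (hN 1 (by simp))
  have hsum := S.sum_inter_add_inter_mul_le F (by omega) hN hE
  rw [hN_last] at hsum
  linarith

/-- **Xiao's key lemma.**  Let `f : S → B` be a fibred surface with general fibre `F`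
(so `F` is nef and `F² = 0`) and let `D` be a divisor on `S`.  Suppose there are
effective divisors `Z₁ ≥ Z₂ ≥ ⋯ ≥ Z_s ≥ Z_{s+1} := 0` (i.e. each `Z_i − Z_{i+1}` is
effective) and rational numbers `μ₁ > μ₂ > ⋯ > μ_s ≥ μ_{s+1} := 0` such that for
every `i = 1, …, s+1` the ℚ-divisor `N_i := D − Z_i − μ_i F` is nef.  Then for any
subset of indices `{j₁ < j₂ < ⋯ < j_t} ⊆ {1, …, s}`, setting `j_{t+1} := s+1` and
`d_j := N_j·F`, one has `D² ≥ Σ_{i=1}^{t} (d_{j_i} + d_{j_{i+1}})(μ_{j_i} − μ_{j_{i+1}})`. -/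
theorem xiao_key_lemma (S : SurfaceIntersection) (D F : S.Div)
    (hF_nef : S.Nef F) (hF_sq : S.inter F F = 0)
    (s : ℕ) (hs : 1 ≤ s)
    (Z : ℕ → S.Div) (μ : ℕ → ℚ)
    (hZ_eff : ∀ i, 1 ≤ i → i ≤ s → S.Eff (Z i))
    (hZ_antitone : ∀ i, 1 ≤ i → i ≤ s → S.Eff (Z i - Z (i + 1)))
    (hZ_last : Z (s + 1) = 0)
    (hμ_strictAnti : ∀ i, 1 ≤ i → i < s → μ (i + 1) < μ i)
    (hμ_s_nonneg : 0 ≤ μ s) (hμ_last : μ (s + 1) = 0)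
    (hN_nef : ∀ i, 1 ≤ i → i ≤ s + 1 → S.Nef (D - Z i - (μ i : ℝ) • F))
    (t : ℕ) (ht : 1 ≤ t) (j : ℕ → ℕ)
    (hj_strictMono : ∀ i, 1 ≤ i → i < t → j i < j (i + 1))
    (hj_range : ∀ i, 1 ≤ i → i ≤ t → 1 ≤ j i ∧ j i ≤ s)
    (hj_last : j (t + 1) = s + 1) :
    ∑ i ∈ Finset.Icc 1 t,
        (S.inter (D - Z (j i) - (μ (j i) : ℝ) • F) F +
            S.inter (D - Z (j (i + 1)) - (μ (j (i + 1)) : ℝ) • F) F) *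
          ((μ (j i) : ℝ) - (μ (j (i + 1)) : ℝ)) ≤
      S.inter D D :=
  xiao_key_lemma_general S D F s Z μ hZ_antitone hZ_last hμ_last hN_nef t j hj_strictMono hj_range
    hj_last
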